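/- Let r ∈ [0, 1), X = (r, 0) ∈ ℝ², θ ∈ [0, 2π) with A(θ) = (cos θ, sin θ) ≠ X. Define cross(P, Q, Y) = (Q − P)₁·(Y − P)₂ − (Q − P)₂·(Y − P)₁ and R(Y, →PQ) = 1 if cross(P, Q, Y) ≤ 0, −1 otherwise. Then | (1/(2π)) ∫₀^{2π} R(A(α), →X A(θ)) dα | = (2/π) · |Complex.arg(1 − r·exp(iθ))|. (The normalized difference of the two arcs into which the line through X and A(θ) cuts the unit circle equals (2/π) times the angle between the vectors from the origin to A(θ) and from X to A(θ).) -/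

import Mathlib

open Real
open scoped Classical

/-- The point `(cos θ, sin θ)` on the unit circle in `ℝ²`. -/
noncomputable def circlePt (θ : ℝ) : EuclideanSpace ℝ (Fin 2) := WithLp.toLp 2 ![Real.cos θ, Real.sin θ]

/-- The point `(x, y)` in `ℝ²`. -/
noncomputable def pt2 (x y : ℝ) : EuclideanSpace ℝ (Fin 2) := WithLp.toLp 2 ![x, y]

/-- The cross product `(Q − P)₁·(Y − P)₂ − (Q − P)₂·(Y − P)₁` detecting on which side of the
directed line from `P` to `Q` the point `Y` lies. -/
noncomputable def cross2 (P Q Y : EuclideanSpace ℝ (Fin 2)) : ℝ :=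
  (Q - P) 0 * (Y - P) 1 - (Q - P) 1 * (Y - P) 0

/-- `R(Y, →PQ)`: equals `1` if `Y` is to the right of or on the directed line from `P` to `Q`
(`cross2 P Q Y ≤ 0`), and `-1` otherwise. -/
noncomputable def Rside (Y P Q : EuclideanSpace ℝ (Fin 2)) : ℝ :=
  if cross2 P Q Y ≤ 0 then 1 else -1

/-!
Write `w = 1 - r e^{iθ} = ‖w‖ e^{iψ}` with `ψ = arg w`. Parametrizing the circle from `A(θ)` as
`A(θ + 2t)`, the cross product equals `2‖w‖ sin t cos (t + ψ)`, so the side function becomes a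
`π`-periodic step function of `t` which is `-1` on `(0, π/2 - ψ)` and `1` on `(π/2 - ψ, π)`.
Its integral over a period is `2ψ`, hence the normalized integral is `2ψ/π`.
-/

theorem Function.Periodic.intervalIntegral_comp_div_sub {g : ℝ → ℝ} {T : ℝ}
    (hg : Function.Periodic g T) {c : ℝ} (hc : c ≠ 0) (d : ℝ) :
    ∫ x in (0:ℝ)..c * T, g (x / c - d) = c * ∫ t in (0:ℝ)..T, g t := by
  rw [intervalIntegral.integral_comp_div_sub (f := g) hc, mul_div_cancel_left₀ T hc, zero_div,
    zero_sub, smul_eq_mul, ← neg_add_eq_sub, hg.intervalIntegral_add_eq (-d) 0, zero_add]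

lemma Complex.norm_mul_cos_add_arg (w : ℂ) (t : ℝ) :
    ‖w‖ * Real.cos (t + w.arg) = w.re * Real.cos t - w.im * Real.sin t := by
  rw [Real.cos_add, ← Complex.norm_mul_cos_arg, ← Complex.norm_mul_sin_arg]
  ring

lemma cross2_pt2_circlePt (r θ t : ℝ) :
    cross2 (pt2 r 0) (circlePt θ) (circlePt (θ + 2 * t)) =
      2 * ‖1 - r * Complex.exp (θ * Complex.I)‖ *
        (Real.sin t * Real.cos (t + (1 - r * Complex.exp (θ * Complex.I)).arg)) := by
  have hre : (1 - r * Complex.exp (θ * Complex.I)).re = 1 - r * Real.cos θ := by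
    simp [Complex.exp_ofReal_mul_I_re]
  have him : (1 - r * Complex.exp (θ * Complex.I)).im = -(r * Real.sin θ) := by
    simp [Complex.exp_ofReal_mul_I_im]
  rw [mul_left_comm, mul_assoc, Complex.norm_mul_cos_add_arg, hre, him]
  simp only [cross2, pt2, circlePt, PiLp.sub_apply, Matrix.cons_val_zero, Matrix.cons_val_one,
    Matrix.cons_val_fin_one, sub_zero]
  rw [Real.sin_add, Real.cos_add, Real.sin_two_mul, Real.cos_two_mul]
  linear_combination (2 * Real.sin t * Real.cos t) * Real.sin_sq_add_cos_sq θ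
    - (2 * r * Real.sin θ) * Real.sin_sq_add_cos_sq t

noncomputable def sideSign (ψ t : ℝ) : ℝ :=
  if Real.sin t * Real.cos (t + ψ) ≤ 0 then 1 else -1

lemma sideSign_periodic (ψ : ℝ) : Function.Periodic (sideSign ψ) π := by
  intro t
  rw [sideSign, sideSign, add_right_comm, Real.sin_add_pi, Real.cos_add_pi, neg_mul_neg]

lemma sideSign_eq_neg_one {ψ t : ℝ} (hψ : |ψ| < π / 2) (ht : t ∈ Set.Ioo 0 (π / 2 - ψ)) :
    sideSign ψ t = -1 := by
  obtain ⟨hψl, -⟩ := abs_lt.mp hψ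
  have hsin : 0 < Real.sin t := Real.sin_pos_of_pos_of_lt_pi ht.1 (by linarith [ht.2])
  have hcos : 0 < Real.cos (t + ψ) :=
    Real.cos_pos_of_mem_Ioo ⟨by linarith [ht.1], by linarith [ht.2]⟩
  exact if_neg (not_le.mpr (mul_pos hsin hcos))

lemma sideSign_eq_one {ψ t : ℝ} (hψ : |ψ| < π / 2) (ht : t ∈ Set.Ioo (π / 2 - ψ) π) :
    sideSign ψ t = 1 := by
  obtain ⟨-, hψr⟩ := abs_lt.mp hψ
  have hsin : 0 ≤ Real.sin t := Real.sin_nonneg_of_nonneg_of_le_pi (by linarith [ht.1]) ht.2.le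
  have hcos : Real.cos (t + ψ) ≤ 0 :=
    Real.cos_nonpos_of_pi_div_two_le_of_le (by linarith [ht.1]) (by linarith [ht.2])
  exact if_pos (mul_nonpos_of_nonneg_of_nonpos hsin hcos)

lemma integral_sideSign {ψ : ℝ} (hψ : |ψ| < π / 2) :
    ∫ t in (0:ℝ)..π, sideSign ψ t = 2 * ψ := by
  obtain ⟨hψl, hψr⟩ := abs_lt.mp hψ
  have hc0 : 0 ≤ π / 2 - ψ := by linarith
  have hcπ : π / 2 - ψ ≤ π := by linarith
  have hleft : Set.EqOn (sideSign ψ) (fun _ ↦ -1) (Set.uIoo 0 (π / 2 - ψ)) := fun t ht ↦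
    sideSign_eq_neg_one hψ (Set.uIoo_of_le hc0 ▸ ht)
  have hright : Set.EqOn (sideSign ψ) (fun _ ↦ 1) (Set.uIoo (π / 2 - ψ) π) := fun t ht ↦
    sideSign_eq_one hψ (Set.uIoo_of_le hcπ ▸ ht)
  rw [← intervalIntegral.integral_add_adjacent_intervals
      ((intervalIntegrable_congr_uIoo hleft).mpr intervalIntegrable_const)
      ((intervalIntegrable_congr_uIoo hright).mpr intervalIntegrable_const),
    intervalIntegral.integral_congr_uIoo hleft, intervalIntegral.integral_congr_uIoo hright]
  simp only [intervalIntegral.integral_const, smul_eq_mul]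
  ring

lemma re_one_sub_mul_exp_pos {r : ℝ} (hr : |r| < 1) (θ : ℝ) :
    0 < (1 - r * Complex.exp (θ * Complex.I)).re := by
  simp only [Complex.sub_re, Complex.one_re, Complex.re_ofReal_mul, Complex.exp_ofReal_mul_I_re]
  have : r * Real.cos θ < 1 :=
    calc r * Real.cos θ ≤ |r| * |Real.cos θ| := abs_mul r (Real.cos θ) ▸ le_abs_self _
      _ ≤ |r| := mul_le_of_le_one_right (abs_nonneg r) (Real.abs_cos_le_one θ)
      _ < 1 := hr
  linarith

lemma Rside_circlePt_eq_sideSign {r : ℝ} (hr : |r| < 1) (θ α : ℝ) :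
    Rside (circlePt α) (pt2 r 0) (circlePt θ) =
      sideSign (1 - r * Complex.exp (θ * Complex.I)).arg ((α - θ) / 2) := by
  have hw : 0 < ‖1 - r * Complex.exp (θ * Complex.I)‖ :=
    norm_pos_iff.mpr fun h ↦ (re_one_sub_mul_exp_pos hr θ).ne' (by rw [h, Complex.zero_re])
  have hα : circlePt α = circlePt (θ + 2 * ((α - θ) / 2)) := by ring_nf
  simp only [Rside, sideSign, hα, cross2_pt2_circlePt, mul_nonpos_iff_pos_imp_nonpos]
  simp [hw]

theorem abs_integral_Rside_eq_arg_general (r : ℝ) (hr : r ∈ Set.Ico (0:ℝ) 1)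
    (θ : ℝ) :
    |(2*π)⁻¹ * ∫ α in (0:ℝ)..(2*π), Rside (circlePt α) (pt2 r 0) (circlePt θ)|
      = (2/π) * |Complex.arg (1 - (r:ℂ) * Complex.exp (θ * Complex.I))| := by
  have hr' : |r| < 1 := abs_lt.mpr ⟨by linarith [hr.1], hr.2⟩
  set ψ := Complex.arg (1 - (r:ℂ) * Complex.exp (θ * Complex.I))
  have hψ : |ψ| < π / 2 :=
    Complex.abs_arg_lt_pi_div_two_iff.mpr (Or.inl (re_one_sub_mul_exp_pos hr' θ))
  have hintegral : ∫ α in (0:ℝ)..(2*π), Rside (circlePt α) (pt2 r 0) (circlePt θ) = 4 * ψ := by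
    simp_rw [Rside_circlePt_eq_sideSign hr', sub_div]
    rw [(sideSign_periodic ψ).intervalIntegral_comp_div_sub two_ne_zero, integral_sideSign hψ]
    ring
  rw [hintegral, abs_mul, abs_mul, abs_of_pos (by positivity : (0:ℝ) < (2*π)⁻¹),
    abs_of_pos (by norm_num : (0:ℝ) < 4)]
  ring

theorem abs_integral_Rside_eq_arg (r : ℝ) (hr : r ∈ Set.Ico (0:ℝ) 1)
    (θ : ℝ) (hθ : θ ∈ Set.Ico (0:ℝ) (2*π)) (hne : circlePt θ ≠ pt2 r 0) :
    |(2*π)⁻¹ * ∫ α in (0:ℝ)..(2*π), Rside (circlePt α) (pt2 r 0) (circlePt θ)|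
      = (2/π) * |Complex.arg (1 - (r:ℂ) * Complex.exp (θ * Complex.I))| :=
  abs_integral_Rside_eq_arg_general r hr θ
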